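/- arXiv:2004.01493 — 2 statements merged into one kernel-verified Lean document; each statement's English description precedes it below -/
import Mathlib

section
/- For every i ∈ {2,…,n} with L[i] = L[i−1], it holds that LF(i) = LF(i−1) + 1. -/
/-- 1-based access to the `i`-th character of `T`. -/
def idx (T : List ℕ) (i : ℕ) : ℕ := T.getD (i - 1) 0

/-- The suffix `T[i..n]` (1-based). -/
def sufx (T : List ℕ) (i : ℕ) : List ℕ := T.drop (i - 1)

/-- Occurrence positions of `P` in `T`: `Occ(T,P) = {i ∈ [1, n−|P|+1] : P = T[i..i+|P|−1]}`. -/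
def OccF (T P : List ℕ) : Finset ℕ :=
  (Finset.Icc 1 (T.length - P.length + 1)).filter (fun i => P <+: T.drop (i - 1))

/-- `children(P) = {Pc : c ∈ Σ, Pc is a substring of T}`. -/
def childrenSet (σ : ℕ) (T P : List ℕ) : Set (List ℕ) :=
  {Q | ∃ c ∈ Finset.Icc 1 σ, Q = P ++ [c] ∧ (P ++ [c]) <:+: T}

/-- Starting positions of the maximal runs of equal characters in `L[1..n]`. -/
def SstartSet (n : ℕ) (L : ℕ → ℕ) : Finset ℕ :=
  (Finset.Icc 1 n).filter (fun i => i = 1 ∨ L i ≠ L (i - 1))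

/-- `rank(S, i) = |{j ∈ S : j ≤ i}|`. -/
def rankOf (S : Finset ℕ) (i : ℕ) : ℕ := (S.filter (fun j => j ≤ i)).card

/-- `(c, p, q)` is an answer of the range distinct query `RD(S, b, e)`:
`c` occurs in `S[b..e]`, and `p`, `q` are the first and last occurrences of `c` in `[b,e]`. -/
def RDmem (S : ℕ → ℕ) (b e c p q : ℕ) : Prop :=
  p ∈ Finset.Icc b e ∧ S p = c ∧ (∀ i ∈ Finset.Icc b e, S i = c → p ≤ i) ∧
  q ∈ Finset.Icc b e ∧ S q = c ∧ (∀ i ∈ Finset.Icc b e, S i = c → i ≤ q)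

/-- `[b,e]` is the suffix-tree interval of `P`: the positions `i ∈ [1,n]` whose suffix
`T[SA[i]..n]` has `P` as a prefix are exactly `{b,…,e}`. -/
def isIntervalOf (n : ℕ) (T : List ℕ) (SA : ℕ → ℕ) (P : List ℕ) (b e : ℕ) : Prop :=
  1 ≤ b ∧ e ≤ n ∧ ∀ i ∈ Finset.Icc 1 n, (P <+: sufx T (SA i) ↔ i ∈ Finset.Icc b e)

/-- Length of the longest common prefix of two lists. -/
def lcpLen : List ℕ → List ℕ → ℕ
  | a :: as, b :: bs => if a = b then lcpLen as bs + 1 else 0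
  | _, _ => 0

/-- `𝓛_t`: substrings of `T` of length `t` whose suffix-tree node is explicit. -/
def LsetD (σ t : ℕ) (T : List ℕ) : Set (List ℕ) :=
  {P | P <:+: T ∧ P.length = t ∧ 2 ≤ (childrenSet σ T P).ncard}

/-- `K_t = ⋃_{P ∈ 𝓛_t} children(P)`. -/
def KsetD (σ t : ℕ) (T : List ℕ) : Set (List ℕ) :=
  {Q | ∃ P ∈ LsetD σ t T, Q ∈ childrenSet σ T P}

/-- `K'_t`: members of `K_t` that are not the last child of their parent, i.e. whose
interval has a right endpoint different from that of the parent's interval. -/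
def KpsetD (σ n t : ℕ) (T : List ℕ) (SA : ℕ → ℕ) : Set (List ℕ) :=
  {Q | ∃ P ∈ LsetD σ t T, Q ∈ childrenSet σ T P ∧
    ∃ b e b' e' : ℕ, isIntervalOf n T SA P b e ∧ isIntervalOf n T SA Q b' e' ∧ e' ≠ e}


lemma sufx_cons {T : List ℕ} {m n : ℕ} (h1 : 1 ≤ m) (h2 : m ≤ n) (hl : T.length = n) :
    sufx T m = idx T m :: sufx T (m+1) := by
  unfold sufx idx
  have hm : m - 1 < T.length := by omega
  rw [List.drop_eq_getElem_cons hm, List.getD_eq_getElem _ _ hm]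
  congr 2
  omega

lemma not_lex_nil' {l : List ℕ} : ¬ List.Lex (·<·) l [] := fun h => nomatch h

lemma lex_between {c : ℕ} {u v w : List ℕ}
    (h1 : List.Lex (·<·) (c::u) v) (h2 : List.Lex (·<·) v (c::w)) :
    ∃ v', v = c::v' ∧ List.Lex (·<·) u v' ∧ List.Lex (·<·) v' w := by
  cases v with
  | nil => cases h1
  | cons d v' =>
    cases h1 with
    | rel hcd =>
      cases h2 with
      | rel hdc => omega
      | cons h => omega
    | cons h1' =>
      cases h2 with
      | rel hdc => omega
      | cons h2' => exact ⟨v', rfl, h1', h2'⟩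

theorem stmt2
    (σ n : ℕ) (T : List ℕ)
    (hn : 2 ≤ n) (hlen : T.length = n)
    (halpha : ∀ c ∈ T, c ∈ Finset.Icc 1 σ)
    (hocc : ∀ c ∈ Finset.Icc 1 σ, c ∈ T)
    (hdollar : ∀ i ∈ Finset.Icc 1 (n - 1), idx T i ≠ idx T n)
    (SA : ℕ → ℕ)
    (hSA_mem : ∀ i ∈ Finset.Icc 1 n, SA i ∈ Finset.Icc 1 n)
    (hSA_surj : ∀ j ∈ Finset.Icc 1 n, ∃ i ∈ Finset.Icc 1 n, SA i = j)
    (hSA_sorted : ∀ i j, i ∈ Finset.Icc 1 n → j ∈ Finset.Icc 1 n → i < j →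
      List.Lex (· < ·) (sufx T (SA i)) (sufx T (SA j)))
    (LF : ℕ → ℕ)
    (hLF_mem : ∀ i ∈ Finset.Icc 1 n, LF i ∈ Finset.Icc 1 n)
    (hLF : ∀ i ∈ Finset.Icc 1 n, SA i ≠ 1 → SA (LF i) = SA i - 1)
    (hLF1 : ∀ i ∈ Finset.Icc 1 n, SA i = 1 → SA (LF i) = n)
    (L : ℕ → ℕ)
    (hL : ∀ i ∈ Finset.Icc 1 n, L i = idx T (SA (LF i)))
 :
    ∀ i ∈ Finset.Icc 2 n, L i = L (i - 1) → LF i = LF (i - 1) + 1 := by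
  -- SA is injective on [1,n]
  have hirr : ∀ l : List ℕ, ¬ List.Lex (·<·) l l := fun l => irrefl l
  have hasy : ∀ {l m : List ℕ}, List.Lex (·<·) l m → ¬ List.Lex (·<·) m l :=
    fun h => asymm h
  have hSA_inj : ∀ i ∈ Finset.Icc 1 n, ∀ j ∈ Finset.Icc 1 n, SA i = SA j → i = j := by
    intro i hi j hj hij
    rcases lt_trichotomy i j with h | h | h
    · exact absurd (hSA_sorted i j hi hj h) (by rw [hij]; exact hirr _)
    · exact h
    · exact absurd (hSA_sorted j i hj hi h) (by rw [hij]; exact hirr _)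
  -- if suffixes compare, indices compare
  have h_lt_of_lex : ∀ i ∈ Finset.Icc 1 n, ∀ j ∈ Finset.Icc 1 n,
      List.Lex (·<·) (sufx T (SA i)) (sufx T (SA j)) → i < j := by
    intro i hi j hj h
    rcases lt_trichotomy i j with h' | h' | h'
    · exact h'
    · subst h'; exact absurd h (hirr _)
    · exact absurd (hSA_sorted j i hj hi h') (hasy h)
  intro i hi hLeq
  simp only [Finset.mem_Icc] at hi
  set i' := i - 1 with hi'def
  have hi_mem : i ∈ Finset.Icc 1 n := by simp [Finset.mem_Icc]; omega
  have hi'_mem : i' ∈ Finset.Icc 1 n := by simp [Finset.mem_Icc]; omega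
  set a := LF i with ha_def
  set b := LF i' with hb_def
  have ha_mem : a ∈ Finset.Icc 1 n := hLF_mem i hi_mem
  have hb_mem : b ∈ Finset.Icc 1 n := hLF_mem i' hi'_mem
  have hSAa := hSA_mem a ha_mem
  have hSAb := hSA_mem b hb_mem
  simp only [Finset.mem_Icc] at hSAa hSAb ha_mem hb_mem
  have hc : idx T (SA a) = idx T (SA b) := by
    have h1 := hL i hi_mem
    have h2 := hL i' hi'_mem
    rw [h1, h2] at hLeq
    exact hLeq
  -- both SA a and SA b cannot be n
  have hnotboth : ¬ (SA a = n ∧ SA b = n) := by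
    rintro ⟨h1, h2⟩
    have hab : a = b := hSA_inj a (by simp [Finset.mem_Icc]; omega)
      b (by simp [Finset.mem_Icc]; omega) (h1.trans h2.symm)
    -- then SA (LF i) = SA (LF i') hence i = i'
    have : i = i' := by
      by_cases h3 : SA i = 1
      · have e1 := hLF1 i hi_mem h3
        by_cases h4 : SA i' = 1
        · exact hSA_inj i hi_mem i' hi'_mem (h3.trans h4.symm)
        · have e2 := hLF i' hi'_mem h4
          have hSAi' := hSA_mem i' hi'_mem
          simp only [Finset.mem_Icc] at hSAi'
          rw [← ha_def, hab, hb_def] at e1; omega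
      · have e1 := hLF i hi_mem h3
        by_cases h4 : SA i' = 1
        · have e2 := hLF1 i' hi'_mem h4
          have hSAi := hSA_mem i hi_mem
          simp only [Finset.mem_Icc] at hSAi
          rw [← ha_def, hab, hb_def] at e1; omega
        · have e2 := hLF i' hi'_mem h4
          rw [← ha_def, hab, hb_def] at e1
          have : SA i = SA i' := by
            have hSAi := hSA_mem i hi_mem
            have hSAi' := hSA_mem i' hi'_mem
            simp only [Finset.mem_Icc] at hSAi hSAi'
            omega
          exact hSA_inj i hi_mem i' hi'_mem this
    omega
  have hSAa_ne : SA a ≠ n := by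
    intro h1
    apply hnotboth
    refine ⟨h1, ?_⟩
    by_contra h2
    have : SA b ∈ Finset.Icc 1 (n-1) := by simp [Finset.mem_Icc]; omega
    exact hdollar (SA b) this (by rw [← hc, h1])
  have hSAb_ne : SA b ≠ n := by
    intro h2
    apply hnotboth
    refine ⟨?_, h2⟩
    by_contra h1
    have : SA a ∈ Finset.Icc 1 (n-1) := by simp [Finset.mem_Icc]; omega
    exact hdollar (SA a) this (by rw [hc, h2])
  have hSAi_ne1 : SA i ≠ 1 := by
    intro h; exact hSAa_ne (hLF1 i hi_mem h)
  have hSAi'_ne1 : SA i' ≠ 1 := by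
    intro h; exact hSAb_ne (hLF1 i' hi'_mem h)
  have ea : SA a = SA i - 1 := hLF i hi_mem hSAi_ne1
  have eb : SA b = SA i' - 1 := hLF i' hi'_mem hSAi'_ne1
  have hSAi := hSA_mem i hi_mem
  have hSAi' := hSA_mem i' hi'_mem
  simp only [Finset.mem_Icc] at hSAi hSAi'
  -- suffix decompositions
  have hsa : sufx T (SA a) = idx T (SA a) :: sufx T (SA i) := by
    have h1 : SA a + 1 = SA i := by omega
    rw [sufx_cons (T := T) (m := SA a) (n := n) (by omega) (by omega) hlen, h1]
  have hsb : sufx T (SA b) = idx T (SA a) :: sufx T (SA i') := by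
    have h1 : SA b + 1 = SA i' := by omega
    rw [sufx_cons (T := T) (m := SA b) (n := n) (by omega) (by omega) hlen, h1, ← hc]
  -- b < a
  have h_ii' : List.Lex (·<·) (sufx T (SA i')) (sufx T (SA i)) :=
    hSA_sorted i' i hi'_mem hi_mem (by omega)
  have hba : b < a := by
    apply h_lt_of_lex b (by simp [Finset.mem_Icc]; omega) a (by simp [Finset.mem_Icc]; omega)
    rw [hsa, hsb]
    exact List.Lex.cons h_ii'
  -- a = b + 1
  by_contra hne
  have hk : b + 1 < a := by omega
  set k := b + 1 with hk_def
  have hk_mem : k ∈ Finset.Icc 1 n := by simp [Finset.mem_Icc]; omega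
  have h1 : List.Lex (·<·) (sufx T (SA b)) (sufx T (SA k)) :=
    hSA_sorted b k (by simp [Finset.mem_Icc]; omega) hk_mem (by omega)
  have h2 : List.Lex (·<·) (sufx T (SA k)) (sufx T (SA a)) :=
    hSA_sorted k a hk_mem (by simp [Finset.mem_Icc]; omega) hk
  rw [hsb] at h1
  rw [hsa] at h2
  obtain ⟨v', hv', hlex1, hlex2⟩ := lex_between h1 h2
  have hSAk := hSA_mem k hk_mem
  simp only [Finset.mem_Icc] at hSAk
  have hsk : sufx T (SA k) = idx T (SA k) :: sufx T (SA k + 1) :=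
    sufx_cons (by omega) (by omega) hlen
  rw [hsk] at hv'
  have hv'eq : v' = sufx T (SA k + 1) := ((List.cons.injEq _ _ _ _).mp hv').2.symm
  have hSAk_ne : SA k ≠ n := by
    intro h
    rw [hv'eq] at hlex1
    have : sufx T (SA k + 1) = [] := by
      unfold sufx
      apply List.drop_eq_nil_of_le
      omega
    rw [this] at hlex1
    exact not_lex_nil' hlex1
  obtain ⟨j, hj_mem, hj⟩ := hSA_surj (SA k + 1) (by simp [Finset.mem_Icc]; omega)
  rw [hv'eq, ← hj] at hlex1 hlex2
  have hji : j < i := h_lt_of_lex j hj_mem i hi_mem hlex2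
  have hij' : i' < j := h_lt_of_lex i' hi'_mem j hj_mem hlex1
  omega
end

section
/- For every integer t ≥ 0, |P_t| ≤ r, where r is the number of maximal runs of equal characters in the BWT L of T. -/
/-!
If `L[i] = L[i-1] = c`, then `LF` sends rows `i - 1` and `i` to adjacent rows, whose suffixes are
those of rows `i - 1` and `i` with `c` prepended; hence `LCP[LF i] = LCP[i] + 1`. So every
`i ∈ P_t` is either the start of a run of `L` or is sent injectively by `LF` into `P_{t+1}`, and
downward induction on `t` gives `|P_t| ≤ #{j ∈ S_start : j ≥ 2, LCP[j] ≥ t} ≤ r`.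
-/

open Finset

theorem sufx_eq_cons {T : List ℕ} {j : ℕ} (h1 : 1 ≤ j) (h2 : j ≤ T.length) :
    sufx T j = idx T j :: sufx T (j + 1) := by
  have hlt : j - 1 < T.length := by omega
  rw [sufx, sufx, idx, List.getD_eq_getElem _ _ hlt, show j + 1 - 1 = j - 1 + 1 by omega,
    List.getElem_cons_drop]

theorem lcpLen_cons_cons_self (c : ℕ) (u v : List ℕ) :
    lcpLen (c :: u) (c :: v) = lcpLen u v + 1 := by simp [lcpLen]

structure IsSuffixArray (T : List ℕ) (SA : ℕ → ℕ) : Prop where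
  mem : ∀ i ∈ Icc 1 T.length, SA i ∈ Icc 1 T.length
  surj : ∀ j ∈ Icc 1 T.length, ∃ i ∈ Icc 1 T.length, SA i = j
  sorted : ∀ i j, i ∈ Icc 1 T.length → j ∈ Icc 1 T.length → i < j →
    List.Lex (· < ·) (sufx T (SA i)) (sufx T (SA j))

namespace IsSuffixArray

variable {T : List ℕ} {SA : ℕ → ℕ}

theorem strictMonoOn (hSA : IsSuffixArray T SA) :
    StrictMonoOn (fun i => sufx T (SA i)) (Icc 1 T.length : Set ℕ) :=
  fun _ hi _ hj hij => hSA.sorted _ _ hi hj hij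

theorem injOn (hSA : IsSuffixArray T SA) : Set.InjOn SA (Icc 1 T.length : Set ℕ) :=
  fun _ hi _ hj hij => hSA.strictMonoOn.injOn hi hj (by simp only [hij])

theorem sufx_succ_eq_nil_or (hSA : IsSuffixArray T SA) {j : ℕ} (hj : j ∈ Icc 1 T.length) :
    sufx T (SA j + 1) = [] ∨ ∃ k ∈ Icc 1 T.length, sufx T (SA j + 1) = sufx T (SA k) := by
  have hSAj := mem_Icc.1 (hSA.mem j hj)
  rcases eq_or_lt_of_le hSAj.2 with hn | hlt
  · left
    simp [sufx, hn]
  · obtain ⟨k, hk, hSAk⟩ := hSA.surj (SA j + 1) (mem_Icc.2 ⟨by omega, hlt⟩)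
    exact Or.inr ⟨k, hk, by rw [hSAk]⟩

theorem eq_succ_of_cons (hSA : IsSuffixArray T SA) {a p q c : ℕ}
    (ha : a ∈ Icc 1 T.length) (ha' : a + 1 ∈ Icc 1 T.length)
    (hp : p ∈ Icc 1 T.length) (hq : q ∈ Icc 1 T.length)
    (hpa : sufx T (SA p) = c :: sufx T (SA a)) (hqa : sufx T (SA q) = c :: sufx T (SA (a + 1))) :
    q = p + 1 := by
  have hmono := hSA.strictMonoOn
  have hpq : p < q := by
    rw [← hmono.lt_iff_lt hp hq]
    change sufx T (SA p) < sufx T (SA q)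
    rw [hpa, hqa, List.cons_lt_cons_iff]
    exact Or.inr ⟨rfl, hmono (a := a) ha ha' (by omega)⟩
  -- A row strictly between `p` and `q` would carry a suffix `c :: s` with `s` strictly between
  -- the suffixes of the consecutive ranks `a` and `a + 1`.
  by_contra hne
  have hj : p + 1 ∈ Icc 1 T.length := by simp only [mem_Icc] at hp hq ⊢; omega
  have hpj : sufx T (SA p) < sufx T (SA (p + 1)) := hmono hp hj (by omega)
  have hjq : sufx T (SA (p + 1)) < sufx T (SA q) := hmono hj hq (by omega)
  have hSAj := mem_Icc.1 (hSA.mem _ hj)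
  rw [sufx_eq_cons hSAj.1 hSAj.2, hpa, List.cons_lt_cons_iff] at hpj
  rw [sufx_eq_cons hSAj.1 hSAj.2, hqa, List.cons_lt_cons_iff] at hjq
  have hd : idx T (SA (p + 1)) = c := by
    rcases hpj with h | ⟨h, _⟩ <;> rcases hjq with h' | ⟨h', _⟩ <;> omega
  simp only [hd, lt_self_iff_false, false_or, true_and] at hpj hjq
  rcases hSA.sufx_succ_eq_nil_or hj with hnil | ⟨k, hk, hsk⟩
  · exact List.not_lt_nil _ (hnil ▸ hpj)
  · rw [hsk] at hpj hjq
    have := (hmono.lt_iff_lt ha hk).1 hpj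
    have := (hmono.lt_iff_lt hk ha').1 hjq
    omega

end IsSuffixArray

theorem card_filter_eq_le_card_filter_not_and_le {α : Type*} (s : Finset α) (f : α → ℕ)
    (g : α → α) (p : α → Prop) [DecidablePred p]
    (hg : ∀ i ∈ s, p i → g i ∈ s ∧ f (g i) = f i + 1)
    (hinj : Set.InjOn g {i | i ∈ s ∧ p i}) (t : ℕ) :
    #{i ∈ s | f i = t} ≤ #{i ∈ s | ¬ p i ∧ t ≤ f i} := by
  suffices h : ∀ k t, s.sup f < t + k → #{i ∈ s | f i = t} ≤ #{i ∈ s | ¬ p i ∧ t ≤ f i} from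
    h (s.sup f + 1) t (by omega)
  intro k
  induction k with
  | zero =>
    intro t ht
    have hempty : {i ∈ s | f i = t} = ∅ :=
      filter_eq_empty_iff.2 fun i hi hit => by have := le_sup (f := f) hi; omega
    simp [hempty]
  | succ k ih =>
    intro t ht
    have hshift : #{i ∈ s | f i = t ∧ p i} ≤ #{i ∈ s | f i = t + 1} := by
      refine card_le_card_of_injOn g (fun i hi => ?_) (hinj.mono fun i hi => ?_)
      · simp only [coe_filter, Set.mem_ofPred_eq] at hi ⊢
        obtain ⟨hgs, hgf⟩ := hg i hi.1 hi.2.2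
        exact ⟨hgs, by omega⟩
      · simp only [coe_filter, Set.mem_ofPred_eq] at hi ⊢
        exact ⟨hi.1, hi.2.2⟩
    have hsplit_eq := card_filter_add_card_filter_not (s := {i ∈ s | f i = t}) (p := p)
    have hsplit_le := card_filter_add_card_filter_not (s := {i ∈ s | ¬ p i ∧ t ≤ f i})
      (p := fun i => f i = t)
    simp only [filter_filter] at hsplit_eq hsplit_le
    have hnext : {i ∈ s | ¬ p i ∧ t + 1 ≤ f i} = {i ∈ s | (¬ p i ∧ t ≤ f i) ∧ ¬ f i = t} :=
      filter_congr fun i _ => by rw [Nat.add_one_le_iff, lt_iff_le_and_ne, ne_comm, and_assoc]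
    have hstop : {i ∈ s | f i = t ∧ ¬ p i} = {i ∈ s | (¬ p i ∧ t ≤ f i) ∧ f i = t} :=
      filter_congr fun i _ => ⟨fun ⟨h, hp⟩ => ⟨⟨hp, h.ge⟩, h⟩, fun ⟨⟨hp, _⟩, h⟩ => ⟨h, hp⟩⟩
    have := ih (t + 1) (by omega)
    rw [hnext] at this
    rw [hstop] at hsplit_eq
    omega

structure IsLFMapping (T : List ℕ) (SA LF : ℕ → ℕ) : Prop where
  mem : ∀ i ∈ Icc 1 T.length, LF i ∈ Icc 1 T.length
  pred : ∀ i ∈ Icc 1 T.length, SA i ≠ 1 → SA (LF i) = SA i - 1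
  wrap : ∀ i ∈ Icc 1 T.length, SA i = 1 → SA (LF i) = T.length

namespace IsLFMapping

variable {T : List ℕ} {SA LF L : ℕ → ℕ}

theorem injOn (hSA : IsSuffixArray T SA) (hLF : IsLFMapping T SA LF) :
    Set.InjOn LF (Icc 1 T.length : Set ℕ) := by
  intro i hi j hj hij
  apply hSA.injOn hi hj
  have hSAi := mem_Icc.1 (hSA.mem i hi)
  have hSAj := mem_Icc.1 (hSA.mem j hj)
  by_cases h1 : SA i = 1 <;> by_cases h2 : SA j = 1
  · rw [h1, h2]
  · have := hLF.pred j hj h2; rw [← hij, hLF.wrap i hi h1] at this; omega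
  · have := hLF.pred i hi h1; rw [hij, hLF.wrap j hj h2] at this; omega
  · have := hLF.pred i hi h1; rw [hij, hLF.pred j hj h2] at this; omega

theorem sufx_LF (hSA : IsSuffixArray T SA) (hLF : IsLFMapping T SA LF)
    (hL : ∀ i ∈ Icc 1 T.length, L i = idx T (SA (LF i))) {i : ℕ} (hi : i ∈ Icc 1 T.length)
    (h1 : SA i ≠ 1) : sufx T (SA (LF i)) = L i :: sufx T (SA i) := by
  have hSAi := mem_Icc.1 (hSA.mem i hi)
  rw [hL i hi, hLF.pred i hi h1, sufx_eq_cons (by omega) (by omega), Nat.sub_add_cancel hSAi.1]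

-- `L i = T[n]` exactly when `SA i = 1`, and `T[n]` occurs nowhere else in `T`.
theorem SA_ne_one_of_L_eq (hSA : IsSuffixArray T SA) (hLF : IsLFMapping T SA LF)
    (hL : ∀ i ∈ Icc 1 T.length, L i = idx T (SA (LF i)))
    (hdollar : ∀ i ∈ Icc 1 (T.length - 1), idx T i ≠ idx T T.length)
    {i j : ℕ} (hi : i ∈ Icc 1 T.length) (hj : j ∈ Icc 1 T.length) (hij : i ≠ j)
    (hLij : L i = L j) : SA i ≠ 1 := by
  intro h1
  have h1' : SA j ≠ 1 := fun h => hij (hSA.injOn hi hj (h1.trans h.symm))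
  have hSAj := mem_Icc.1 (hSA.mem j hj)
  apply hdollar (SA j - 1) (mem_Icc.2 ⟨by omega, by omega⟩)
  rw [← hLF.pred j hj h1', ← hL j hj, ← hLij, hL i hi, hLF.wrap i hi h1]

theorem sufx_LF_of_L_eq (hSA : IsSuffixArray T SA) (hLF : IsLFMapping T SA LF)
    (hL : ∀ i ∈ Icc 1 T.length, L i = idx T (SA (LF i)))
    (hdollar : ∀ i ∈ Icc 1 (T.length - 1), idx T i ≠ idx T T.length)
    {i : ℕ} (hi : i ∈ Icc 2 T.length) (hLi : L i = L (i - 1)) :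
    sufx T (SA (LF (i - 1))) = L i :: sufx T (SA (i - 1)) ∧
      sufx T (SA (LF i)) = L i :: sufx T (SA i) := by
  have hi1 : i ∈ Icc 1 T.length := by simp only [mem_Icc] at hi ⊢; omega
  have hi0 : i - 1 ∈ Icc 1 T.length := by simp only [mem_Icc] at hi ⊢; omega
  have hne : i ≠ i - 1 := by simp only [mem_Icc] at hi; omega
  refine ⟨?_, hLF.sufx_LF hSA hL hi1 (hLF.SA_ne_one_of_L_eq hSA hL hdollar hi1 hi0 hne hLi)⟩
  rw [hLi]
  exact hLF.sufx_LF hSA hL hi0 (hLF.SA_ne_one_of_L_eq hSA hL hdollar hi0 hi1 hne.symm hLi.symm)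

theorem LF_eq_succ_of_L_eq (hSA : IsSuffixArray T SA) (hLF : IsLFMapping T SA LF)
    (hL : ∀ i ∈ Icc 1 T.length, L i = idx T (SA (LF i)))
    (hdollar : ∀ i ∈ Icc 1 (T.length - 1), idx T i ≠ idx T T.length)
    {i : ℕ} (hi : i ∈ Icc 2 T.length) (hLi : L i = L (i - 1)) :
    LF i = LF (i - 1) + 1 := by
  have hi1 : i ∈ Icc 1 T.length := by simp only [mem_Icc] at hi ⊢; omega
  have hi0 : i - 1 ∈ Icc 1 T.length := by simp only [mem_Icc] at hi ⊢; omega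
  have hsucc : i - 1 + 1 = i := by simp only [mem_Icc] at hi; omega
  obtain ⟨hprev, hcur⟩ := hLF.sufx_LF_of_L_eq hSA hL hdollar hi hLi
  exact hSA.eq_succ_of_cons hi0 (hsucc ▸ hi1) (hLF.mem _ hi0) (hLF.mem _ hi1) hprev
    (hsucc ▸ hcur)

theorem LCP_LF_eq_succ (hSA : IsSuffixArray T SA) (hLF : IsLFMapping T SA LF)
    (hL : ∀ i ∈ Icc 1 T.length, L i = idx T (SA (LF i)))
    (hdollar : ∀ i ∈ Icc 1 (T.length - 1), idx T i ≠ idx T T.length) {LCP : ℕ → ℕ}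
    (hLCP : ∀ i ∈ Icc 2 T.length, LCP i = lcpLen (sufx T (SA (i - 1))) (sufx T (SA i)))
    {i : ℕ} (hi : i ∈ Icc 2 T.length) (hLi : L i = L (i - 1)) :
    LF i ∈ Icc 2 T.length ∧ LCP (LF i) = LCP i + 1 := by
  have hi0 : i - 1 ∈ Icc 1 T.length := by simp only [mem_Icc] at hi ⊢; omega
  have hsucc := hLF.LF_eq_succ_of_L_eq hSA hL hdollar hi hLi
  have hLFi : LF i ∈ Icc 2 T.length := by
    have := mem_Icc.1 (hLF.mem _ hi0)
    have := mem_Icc.1 (hLF.mem i (by simp only [mem_Icc] at hi ⊢; omega))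
    exact mem_Icc.2 ⟨by omega, by omega⟩
  obtain ⟨hprev, hcur⟩ := hLF.sufx_LF_of_L_eq hSA hL hdollar hi hLi
  refine ⟨hLFi, ?_⟩
  rw [hLCP _ hLFi, hLCP i hi, hsucc, Nat.add_sub_cancel, hprev, ← hsucc, hcur,
    lcpLen_cons_cons_self]

end IsLFMapping

theorem stmt9_general
    (n : ℕ) (T : List ℕ)
    (hlen : T.length = n)
    (hdollar : ∀ i ∈ Finset.Icc 1 (n - 1), idx T i ≠ idx T n)
    (SA : ℕ → ℕ)
    (hSA_mem : ∀ i ∈ Finset.Icc 1 n, SA i ∈ Finset.Icc 1 n)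
    (hSA_surj : ∀ j ∈ Finset.Icc 1 n, ∃ i ∈ Finset.Icc 1 n, SA i = j)
    (hSA_sorted : ∀ i j, i ∈ Finset.Icc 1 n → j ∈ Finset.Icc 1 n → i < j →
      List.Lex (· < ·) (sufx T (SA i)) (sufx T (SA j)))
    (LF : ℕ → ℕ)
    (hLF_mem : ∀ i ∈ Finset.Icc 1 n, LF i ∈ Finset.Icc 1 n)
    (hLF : ∀ i ∈ Finset.Icc 1 n, SA i ≠ 1 → SA (LF i) = SA i - 1)
    (hLF1 : ∀ i ∈ Finset.Icc 1 n, SA i = 1 → SA (LF i) = n)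
    (L : ℕ → ℕ)
    (hL : ∀ i ∈ Finset.Icc 1 n, L i = idx T (SA (LF i)))
    (LCP : ℕ → ℕ)
    (hLCP : ∀ i ∈ Finset.Icc 2 n, LCP i = lcpLen (sufx T (SA (i - 1))) (sufx T (SA i)))
 :
    ∀ t : ℕ, ((Finset.Icc 2 n).filter (fun i => LCP i = t)).card ≤ (SstartSet n L).card := by
  subst hlen
  have hSA : IsSuffixArray T SA := ⟨hSA_mem, hSA_surj, hSA_sorted⟩
  have hLFmap : IsLFMapping T SA LF := ⟨hLF_mem, hLF, hLF1⟩
  intro t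
  calc #{i ∈ Icc 2 T.length | LCP i = t}
      ≤ #{i ∈ Icc 2 T.length | ¬ L i = L (i - 1) ∧ t ≤ LCP i} :=
        card_filter_eq_le_card_filter_not_and_le _ LCP LF (fun i => L i = L (i - 1))
          (fun i hi hLi => hLFmap.LCP_LF_eq_succ hSA hL hdollar hLCP hi hLi)
          ((hLFmap.injOn hSA).mono fun i hi => by
            simp only [Set.mem_ofPred_eq, mem_coe, mem_Icc] at hi ⊢; omega) t
    _ ≤ #(SstartSet T.length L) := card_le_card fun i hi => by
        simp only [SstartSet, mem_filter, mem_Icc] at hi ⊢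
        exact ⟨⟨by omega, hi.1.2⟩, Or.inr hi.2.1⟩

theorem stmt9
    (σ n : ℕ) (T : List ℕ)
    (hn : 2 ≤ n) (hlen : T.length = n)
    (halpha : ∀ c ∈ T, c ∈ Finset.Icc 1 σ)
    (hocc : ∀ c ∈ Finset.Icc 1 σ, c ∈ T)
    (hdollar : ∀ i ∈ Finset.Icc 1 (n - 1), idx T i ≠ idx T n)
    (SA : ℕ → ℕ)
    (hSA_mem : ∀ i ∈ Finset.Icc 1 n, SA i ∈ Finset.Icc 1 n)
    (hSA_surj : ∀ j ∈ Finset.Icc 1 n, ∃ i ∈ Finset.Icc 1 n, SA i = j)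
    (hSA_sorted : ∀ i j, i ∈ Finset.Icc 1 n → j ∈ Finset.Icc 1 n → i < j →
      List.Lex (· < ·) (sufx T (SA i)) (sufx T (SA j)))
    (LF : ℕ → ℕ)
    (hLF_mem : ∀ i ∈ Finset.Icc 1 n, LF i ∈ Finset.Icc 1 n)
    (hLF : ∀ i ∈ Finset.Icc 1 n, SA i ≠ 1 → SA (LF i) = SA i - 1)
    (hLF1 : ∀ i ∈ Finset.Icc 1 n, SA i = 1 → SA (LF i) = n)
    (L : ℕ → ℕ)
    (hL : ∀ i ∈ Finset.Icc 1 n, L i = idx T (SA (LF i)))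
    (LCP : ℕ → ℕ)
    (hLCP1 : LCP 1 = 0)
    (hLCP : ∀ i ∈ Finset.Icc 2 n, LCP i = lcpLen (sufx T (SA (i - 1))) (sufx T (SA i)))
 :
    ∀ t : ℕ, ((Finset.Icc 2 n).filter (fun i => LCP i = t)).card ≤ (SstartSet n L).card :=
  stmt9_general n T hlen hdollar SA hSA_mem hSA_surj hSA_sorted LF hLF_mem hLF hLF1 L hL LCP hLCP
end
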